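/- arXiv:0906.1350 — 3 statements merged into one kernel-verified Lean document; each statement's English description precedes it below -/
import Mathlib

section
/- Safety: for every program a (a closed term containing no heap locations) and every semantic type τ, if the semantic typing judgement ∅ ⊨ a : τ holds with the empty type environment, then for every heap h the configuration ⟨h,a⟩ is safe. -/
set_option maxHeartbeats 1000000

namespace ImpObj

/-! # Syntax of the imperative object calculus (type annotations erased) -/

abbrev Var := ℕ
abbrev MethName := ℕ
abbrev Loc := ℕ

inductive Variance : Type where
  | inv | cov | con
  deriving DecidableEq

inductive Tm : Type where
  | var    : Var → Tm
  | obj    : Finset MethName → (MethName → Var) → (MethName → Tm) → Tm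
  | vobj   : Finset MethName → (MethName → Loc) → Tm
  | inv    : Tm → MethName → Tm
  | upd    : Tm → MethName → Var → Tm → Tm
  | clone  : Tm → Tm
  | lam    : Var → Tm → Tm
  | app    : Tm → Tm → Tm
  | fold   : Tm → Tm
  | unfd   : Tm → Tm
  | tlam   : Tm → Tm
  | tapp   : Tm → Tm
  | pack   : Tm → Tm
  | opn    : Tm → Var → Tm → Tm

/-- Free (term) variables. -/
def fv : Tm → Set Var
  | .var x => {x}
  | .obj D xs bs => ⋃ d ∈ D, (fv (bs d) \ {xs d})
  | .vobj _ _ => ∅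
  | .inv a _ => fv a
  | .upd a _ x b => fv a ∪ (fv b \ {x})
  | .clone a => fv a
  | .lam x b => fv b \ {x}
  | .app a b => fv a ∪ fv b
  | .fold a => fv a
  | .unfd a => fv a
  | .tlam a => fv a
  | .tapp a => fv a
  | .pack a => fv a
  | .opn a x b => fv a ∪ (fv b \ {x})

/-- Heap locations occurring in a term. -/
def locs : Tm → Set Loc
  | .var _ => ∅
  | .obj D _ bs => ⋃ d ∈ D, locs (bs d)
  | .vobj E ls => ls '' ↑E
  | .inv a _ => locs a
  | .upd a _ _ b => locs a ∪ locs b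
  | .clone a => locs a
  | .lam _ b => locs b
  | .app a b => locs a ∪ locs b
  | .fold a => locs a
  | .unfd a => locs a
  | .tlam a => locs a
  | .tapp a => locs a
  | .pack a => locs a
  | .opn a _ b => locs a ∪ locs b

/-- Values. -/
inductive IsVal : Tm → Prop where
  | vobj (E : Finset MethName) (ls : MethName → Loc) : IsVal (.vobj E ls)
  | lam (x : Var) (b : Tm) : IsVal (.lam x b)
  | fold {v : Tm} : IsVal v → IsVal (.fold v)
  | tlam (b : Tm) : IsVal (.tlam b)
  | pack {v : Tm} : IsVal v → IsVal (.pack v)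

/-- Closed values. -/
def CVal : Type := {v : Tm // IsVal v ∧ fv v = ∅}

/-- A run-time object is a closed value. -/
def CVal.mkVObj (E : Finset MethName) (ls : MethName → Loc) : CVal :=
  ⟨.vobj E ls, IsVal.vobj E ls, by simp [fv]⟩

def removeKey (σ : Var → Option Tm) (x : Var) : Var → Option Tm :=
  fun y => if y = x then none else σ y

/-- Simultaneous substitution of (closed) terms for free variables. -/
def msubst : Tm → (Var → Option Tm) → Tm
  | .var x, σ => (σ x).getD (.var x)
  | .obj D xs bs, σ => .obj D xs fun d => msubst (bs d) (removeKey σ (xs d))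
  | .vobj E ls, _ => .vobj E ls
  | .inv a m, σ => .inv (msubst a σ) m
  | .upd a m x b, σ => .upd (msubst a σ) m x (msubst b (removeKey σ x))
  | .clone a, σ => .clone (msubst a σ)
  | .lam x b, σ => .lam x (msubst b (removeKey σ x))
  | .app a b, σ => .app (msubst a σ) (msubst b σ)
  | .fold a, σ => .fold (msubst a σ)
  | .unfd a, σ => .unfd (msubst a σ)
  | .tlam a, σ => .tlam (msubst a σ)
  | .tapp a, σ => .tapp (msubst a σ)
  | .pack a, σ => .pack (msubst a σ)
  | .opn a x b, σ => .opn (msubst a σ) x (msubst b (removeKey σ x))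

def subst1 (b : Tm) (x : Var) (v : Tm) : Tm :=
  msubst b fun y => if y = x then some v else none

/-! # Heaps and small-step operational semantics -/

/-- Heaps: finite maps from locations to closed values. -/
structure Heap where
  fn : Loc → Option CVal
  fin : Set.Finite {l | fn l ≠ none}

def Heap.get? (h : Heap) (l : Loc) : Option Tm := (h.fn l).map Subtype.val

abbrev Config := Heap × Tm

/-- Evaluation contexts (left-to-right, call-by-value). -/
inductive ECtx : Type where
  | hole : ECtx
  | inv : ECtx → MethName → ECtx
  | upd : ECtx → MethName → Var → Tm → ECtx
  | clone : ECtx → ECtx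
  | appL : ECtx → Tm → ECtx
  | appR : (v : Tm) → IsVal v → ECtx → ECtx
  | fold : ECtx → ECtx
  | unfd : ECtx → ECtx
  | tapp : ECtx → ECtx
  | pack : ECtx → ECtx
  | opn : ECtx → Var → Tm → ECtx

def ECtx.plug : ECtx → Tm → Tm
  | .hole, a => a
  | .inv E m, a => .inv (E.plug a) m
  | .upd E m x b, a => .upd (E.plug a) m x b
  | .clone E, a => .clone (E.plug a)
  | .appL E b, a => .app (E.plug a) b
  | .appR v _ E, a => .app v (E.plug a)
  | .fold E, a => .fold (E.plug a)
  | .unfd E, a => .unfd (E.plug a)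
  | .tapp E, a => .tapp (E.plug a)
  | .pack E, a => .pack (E.plug a)
  | .opn E x b, a => .opn (E.plug a) x b

/-- Head (redex) reductions. -/
inductive Head : Config → Config → Prop where
  | obj {h h' : Heap} {D : Finset MethName} {xs : MethName → Var} {bs : MethName → Tm}
      {ls : MethName → Loc} :
      (∀ d ∈ D, h.fn (ls d) = none) →
      Set.InjOn ls ↑D →
      (∀ d ∈ D, h'.get? (ls d) = some (.lam (xs d) (bs d))) →
      (∀ l : Loc, (∀ d ∈ D, ls d ≠ l) → h'.fn l = h.fn l) →
      Head (h, .obj D xs bs) (h', .vobj D ls)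
  | inv {h : Heap} {E : Finset MethName} {ls : MethName → Loc} {e : MethName} {f : Tm} :
      e ∈ E → h.get? (ls e) = some f →
      Head (h, .inv (.vobj E ls) e) (h, .app f (.vobj E ls))
  | upd {h h' : Heap} {E : Finset MethName} {ls : MethName → Loc} {e : MethName}
      {x : Var} {b : Tm} :
      e ∈ E →
      h'.get? (ls e) = some (.lam x b) →
      (∀ l : Loc, l ≠ ls e → h'.fn l = h.fn l) →
      Head (h, .upd (.vobj E ls) e x b) (h', .vobj E ls)
  | clone {h h' : Heap} {E : Finset MethName} {ls ls' : MethName → Loc} :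
      (∀ e ∈ E, h.fn (ls' e) = none) →
      Set.InjOn ls' ↑E →
      (∀ e ∈ E, h'.fn (ls' e) = h.fn (ls e)) →
      (∀ l : Loc, (∀ e ∈ E, ls' e ≠ l) → h'.fn l = h.fn l) →
      Head (h, .clone (.vobj E ls)) (h', .vobj E ls')
  | beta {h : Heap} {x : Var} {b v : Tm} :
      IsVal v → Head (h, .app (.lam x b) v) (h, subst1 b x v)
  | unfold {h : Heap} {v : Tm} : IsVal v → Head (h, .unfd (.fold v)) (h, v)
  | tbeta {h : Heap} {b : Tm} : Head (h, .tapp (.tlam b)) (h, b)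
  | openv {h : Heap} {v : Tm} {x : Var} {b : Tm} :
      IsVal v → Head (h, .opn (.pack v) x b) (h, subst1 b x v)

/-- One-step reduction: closure of head reduction under evaluation contexts. -/
inductive Step : Config → Config → Prop where
  | ctx {h h' : Heap} {a a' : Tm} (E : ECtx) :
      Head (h, a) (h', a') → Step (h, E.plug a) (h', E.plug a')

/-- `k`-step reduction. -/
inductive StepN : ℕ → Config → Config → Prop where
  | refl (c : Config) : StepN 0 c c
  | tail {n : ℕ} {c c' c'' : Config} : StepN n c c' → Step c' c'' → StepN (n + 1) c c''

def Irred (c : Config) : Prop := ¬ ∃ c', Step c c'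

/-- Safe for `k` steps. -/
def SafeN (c : Config) (k : ℕ) : Prop :=
  ∀ j < k, ∀ c' : Config, StepN j c c' → Irred c' → IsVal c'.2

/-- Safe (for any number of steps). -/
def Safe (c : Config) : Prop := ∀ k, SafeN c k

/-! # The stratified step-indexed universe of pre-types -/

/-- `Approx k` is (the type of elements of) `PreType_k`: sets of triples `(j, Ψ, v)`
with `j < k` and `Ψ ∈ HeapPreTyping_j` a finite map from locations to `PreType_j`. -/
def Approx : ℕ → Type :=
  WellFounded.fix (Nat.lt_wfRel.wf) fun k ih =>
    Set ((j : Fin k) × ({Ψ : Loc → Option (ih j.1 j.isLt) // Set.Finite {l | Ψ l ≠ none}} × CVal))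

/-- Heap pre-typings of level `j`: finite maps from locations to `PreType_j`. -/
def HPT (j : ℕ) : Type :=
  {Ψ : Loc → Option (Approx j) // Set.Finite {l | Ψ l ≠ none}}

theorem Approx_eq (k : ℕ) :
    Approx k = Set ((j : Fin k) × (HPT j.1 × CVal)) :=
  WellFounded.fix_eq _ _ _

def Approx.out {k : ℕ} (S : Approx k) : Set ((j : Fin k) × (HPT j.1 × CVal)) :=
  cast (Approx_eq k) S

def Approx.mk' {k : ℕ} (S : Set ((j : Fin k) × (HPT j.1 × CVal))) : Approx k :=
  cast (Approx_eq k).symm S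

/-- Triples `(j, Ψ, v)` with `Ψ ∈ HeapPreTyping_j` and `v` a closed value. -/
def Triple : Type := (j : ℕ) × (HPT j × CVal)

/-- Pre-types: arbitrary sets of triples. -/
abbrev PreType : Type := Set Triple

/-- View an element of `PreType_k` as a pre-type. -/
def Approx.seg {k : ℕ} (S : Approx k) : PreType :=
  {t | ∃ hlt : t.1 < k, (⟨⟨t.1, hlt⟩, t.2⟩ : (j : Fin k) × (HPT j.1 × CVal)) ∈ S.out}

/-- The `k`-th approximation `⌊τ⌋_k` of a pre-type. -/
def papprox (τ : PreType) (k : ℕ) : PreType := {t ∈ τ | t.1 < k}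

/-- The `k`-th approximation of a pre-type, as an element of `PreType_k`. -/
def toApprox (τ : PreType) (k : ℕ) : Approx k :=
  Approx.mk' {p | (⟨p.1.1, p.2⟩ : Triple) ∈ τ}

def HPT.dom {k : ℕ} (Ψ : HPT k) : Set Loc := {l | Ψ.1 l ≠ none}

/-- `Ψ(l)`, viewed as a pre-type. -/
def HPT.look {k : ℕ} (Ψ : HPT k) (l : Loc) : Option PreType := (Ψ.1 l).map Approx.seg

/-- `⌊Ψ⌋_j(l) = ⌊Ψ(l)⌋_j`, viewed as a pre-type. -/
def HPT.lookA {k : ℕ} (Ψ : HPT k) (j : ℕ) (l : Loc) : Option PreType :=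
  (Ψ.look l).map (papprox · j)

/-- Pointwise approximation `⌊Ψ⌋_j` of a heap pre-typing. -/
def HPT.trunc {k : ℕ} (Ψ : HPT k) (j : ℕ) : HPT j :=
  ⟨fun l => (Ψ.1 l).map fun S => toApprox (Approx.seg S) j, by
    apply Ψ.2.subset
    intro l hl
    simp only [Set.mem_setOf_eq] at hl ⊢
    intro h0
    rw [h0] at hl
    exact hl rfl⟩

/-- A state `(k, Ψ)`. -/
structure St where
  k : ℕ
  Ψ : HPT k

/-- State extension `(k, Ψ) ⊑ (j, Ψ')`. -/
def StExt (s t : St) : Prop :=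
  t.k ≤ s.k ∧ s.Ψ.dom ⊆ t.Ψ.dom ∧ ∀ l ∈ s.Ψ.dom, t.Ψ.lookA t.k l = s.Ψ.lookA t.k l

/-- Semantic types: pre-types closed under state extension. -/
def IsSemType (τ : PreType) : Prop :=
  ∀ t ∈ τ, ∀ (j : ℕ) (Ψ' : HPT j),
    StExt ⟨t.1, t.2.1⟩ ⟨j, Ψ'⟩ → (⟨j, Ψ', t.2.2⟩ : Triple) ∈ τ

/-- Heap typings: heap pre-typings all of whose entries are semantic types. -/
def HPT.IsTy {k : ℕ} (Ψ : HPT k) : Prop :=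
  ∀ l S, Ψ.1 l = some S → IsSemType (Approx.seg S)

/-- Well-typed heap `h :_k Ψ`. -/
def HeapOk (h : Heap) {k : ℕ} (Ψ : HPT k) : Prop :=
  (∀ l ∈ Ψ.dom, h.fn l ≠ none) ∧
  ∀ j < k, ∀ l S, Ψ.1 l = some S → ∀ v : CVal, h.fn l = some v →
    (⟨j, Ψ.trunc j, v⟩ : Triple) ∈ Approx.seg S

/-- A closed term has type `τ` with respect to the state `(k, Ψ)`:  `a :_{k,Ψ} τ`. -/
def HasTypeAt (a : Tm) {k : ℕ} (Ψ : HPT k) (τ : PreType) : Prop :=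
  ∀ j < k, ∀ (h h' : Heap) (b : Tm),
    HeapOk h Ψ → StepN j (h, a) (h', b) → Irred (h', b) →
    ∃ Ψ' : HPT (k - j), Ψ'.IsTy ∧ StExt ⟨k, Ψ⟩ ⟨k - j, Ψ'⟩ ∧ HeapOk h' Ψ' ∧
      ∃ hb : IsVal b ∧ fv b = ∅, (⟨k - j, Ψ', ⟨b, hb⟩⟩ : Triple) ∈ τ

/-! # Semantic typing judgement -/

/-- Semantic type environments. -/
def SemEnv : Type := Var → Option PreType

/-- All types in the environment are semantic types. -/
def EnvSem (Γ : SemEnv) : Prop := ∀ x τ, Γ x = some τ → IsSemType τ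

def envExt (Γ : SemEnv) (x : Var) (τ : PreType) : SemEnv :=
  fun y => if y = x then some τ else Γ y

/-- Value environments. -/
def VEnv : Type := Var → Option CVal

/-- `σ :_{k,Ψ} Σ`. -/
def EnvOk (σ : VEnv) {k : ℕ} (Ψ : HPT k) (Γ : SemEnv) : Prop :=
  ∀ x τ, Γ x = some τ → ∃ v : CVal, σ x = some v ∧ HasTypeAt v.1 Ψ τ

def toSubst (σ : VEnv) : Var → Option Tm := fun x => (σ x).map Subtype.val

/-- The semantic typing judgement `Σ ⊨ a : τ`. -/
def SemJudg (Γ : SemEnv) (a : Tm) (τ : PreType) : Prop :=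
  fv a ⊆ {x | Γ x ≠ none} ∧
  ∀ (k : ℕ) (Ψ : HPT k), Ψ.IsTy → ∀ σ : VEnv, EnvOk σ Ψ Γ →
    HasTypeAt (msubst a (toSubst σ)) Ψ τ

/-! # Semantic type constructors -/

def botTy : PreType := ∅
def topTy : PreType := Set.univ

/-- Procedure types `α → β`. -/
def arrTy (α β : PreType) : PreType :=
  {t | ∃ (x : Var) (b : Tm), t.2.2.1 = Tm.lam x b ∧
    ∀ j < t.1, ∀ Ψ' : HPT j, Ψ'.IsTy → ∀ v : CVal,
      StExt ⟨t.1, t.2.1⟩ ⟨j, Ψ'⟩ → (⟨j, Ψ', v⟩ : Triple) ∈ α →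
      HasTypeAt (subst1 b x v.1) Ψ' β}

/-- "Triples" whose value component is a heap location. -/
def RefEl : Type := (k : ℕ) × (HPT k × Loc)

/-- Invariant reference types. -/
def refInv (τ : PreType) : Set RefEl :=
  {p | ∃ S, p.2.1.1 p.2.2 = some S ∧ papprox (Approx.seg S) p.1 = papprox τ p.1}

/-- Readable (covariant) reference types. -/
def refCov (τ : PreType) : Set RefEl :=
  {p | ∃ S, p.2.1.1 p.2.2 = some S ∧ papprox (Approx.seg S) p.1 ⊆ papprox τ p.1}

/-- Writable (contravariant) reference types. -/
def refCon (τ : PreType) : Set RefEl :=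
  {p | ∃ S, p.2.1.1 p.2.2 = some S ∧ papprox τ p.1 ⊆ papprox (Approx.seg S) p.1}

def refTy : Variance → PreType → Set RefEl
  | .inv => refInv
  | .cov => refCov
  | .con => refCon

/-- Generalized reference types `ref(τʷ, τʳ)`. -/
def refGen (τw τr : PreType) : Set RefEl := refTy .con τw ∩ refTy .cov τr

/-- Closure under state extension for sets of location-triples. -/
def RefClosed (R : Set RefEl) : Prop :=
  ∀ p ∈ R, ∀ (j : ℕ) (Ψ' : HPT j),
    StExt ⟨p.1, p.2.1⟩ ⟨j, Ψ'⟩ → (⟨j, Ψ', p.2.2⟩ : RefEl) ∈ R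

/-- Object types `[m_d :ν_d τ_d]_{d∈D}` (membership of `(k, Ψ, w)`). -/
def objSlice (D : Finset MethName) (ν : MethName → Variance) (τs : MethName → PreType)
    (k : ℕ) (Ψ : HPT k) (w : CVal) : Prop :=
  ∃ (E : Finset MethName) (ls : MethName → Loc),
    w.1 = Tm.vobj E ls ∧ D ⊆ E ∧
    ∃ α' : PreType, IsSemType α' ∧
      papprox α' k ⊆ {t : Triple | ∃ _hlt : t.1 < k, objSlice D ν τs t.1 t.2.1 t.2.2} ∧
      (∀ d ∈ D, (⟨k, Ψ, ls d⟩ : RefEl) ∈ refTy (ν d) (arrTy α' (τs d))) ∧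
      (∀ j, ∀ _hj : j < k, ∀ Ψ' : HPT j, ∀ ls' : MethName → Loc,
        StExt ⟨k, Ψ⟩ ⟨j, Ψ'⟩ →
        (∀ e ∈ E, Ψ'.lookA j (ls' e) = Ψ.lookA j (ls e)) →
        (⟨j, Ψ'.trunc j, CVal.mkVObj E ls'⟩ : Triple) ∈ α')
  termination_by k
  decreasing_by exact _hlt

def objTy (D : Finset MethName) (ν : MethName → Variance) (τs : MethName → PreType) :
    PreType :=
  {t | objSlice D ν τs t.1 t.2.1 t.2.2}

/-- Generalized object types `[m_d : τʷ_d / τʳ_d]_{d∈D}` (membership of `(k, Ψ, w)`). -/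
def objSliceG (D : Finset MethName) (τw τr : MethName → PreType)
    (k : ℕ) (Ψ : HPT k) (w : CVal) : Prop :=
  ∃ (E : Finset MethName) (ls : MethName → Loc),
    w.1 = Tm.vobj E ls ∧ D ⊆ E ∧
    ∃ α' : PreType, IsSemType α' ∧
      papprox α' k ⊆ {t : Triple | ∃ _hlt : t.1 < k, objSliceG D τw τr t.1 t.2.1 t.2.2} ∧
      (∀ d ∈ D, (⟨k, Ψ, ls d⟩ : RefEl) ∈ refGen (arrTy α' (τw d)) (arrTy α' (τr d))) ∧
      (∀ j, ∀ _hj : j < k, ∀ Ψ' : HPT j, ∀ ls' : MethName → Loc,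
        StExt ⟨k, Ψ⟩ ⟨j, Ψ'⟩ →
        (∀ e ∈ E, Ψ'.lookA j (ls' e) = Ψ.lookA j (ls e)) →
        (⟨j, Ψ'.trunc j, CVal.mkVObj E ls'⟩ : Triple) ∈ α')
  termination_by k
  decreasing_by exact _hlt

def objTyG (D : Finset MethName) (τw τr : MethName → PreType) : PreType :=
  {t | objSliceG D τw τr t.1 t.2.1 t.2.2}

/-- Non-expansive type constructors. -/
def NonExpansive (F : PreType → PreType) : Prop :=
  ∀ τ : PreType, IsSemType τ → ∀ k : ℕ, papprox (F τ) k = papprox (F (papprox τ k)) k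

/-- `F` maps semantic types to semantic types. -/
def SemPreserving (F : PreType → PreType) : Prop :=
  ∀ τ : PreType, IsSemType τ → IsSemType (F τ)

/-- Bounded universal types `∀_α F`. -/
def allTy (α : PreType) (F : PreType → PreType) : PreType :=
  {t | ∃ a : Tm, t.2.2.1 = Tm.tlam a ∧
    ∀ (j : ℕ) (Ψ' : HPT j), Ψ'.IsTy → ∀ τ : PreType, IsSemType τ →
      StExt ⟨t.1, t.2.1⟩ ⟨j, Ψ'⟩ → papprox τ j ⊆ papprox α j →
      ∀ i < j, HasTypeAt a (Ψ'.trunc i) (F τ)}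

/-- Bounded existential types `∃_α F`. -/
def exTy (α : PreType) (F : PreType → PreType) : PreType :=
  {t | ∃ v : CVal, t.2.2.1 = Tm.pack v.1 ∧
    ∃ τ : PreType, IsSemType τ ∧ papprox τ t.1 ⊆ papprox α t.1 ∧
      ∀ j < t.1, (⟨j, t.2.1.trunc j, v⟩ : Triple) ∈ F τ}

/-- Iso-recursive types `μF` (membership of `(k, Ψ, w)`). -/
def muMem (F : PreType → PreType) (k : ℕ) (Ψ : HPT k) (w : CVal) : Prop :=
  ∃ v : CVal, w.1 = Tm.fold v.1 ∧
    ∀ j, j < k →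
      (⟨j, Ψ.trunc j, v⟩ : Triple) ∈
        F {t : Triple | ∃ _hlt : t.1 < k, muMem F t.1 t.2.1 t.2.2}
  termination_by k
  decreasing_by exact _hlt

def muTy (F : PreType → PreType) : PreType := {t | muMem F t.1 t.2.1 t.2.2}

/-- The defining property of the object type `[m_d :ν_d τ_d]_{d∈D}` (fixed-point form). -/
def ObjMemProp (D : Finset MethName) (ν : MethName → Variance) (τs : MethName → PreType)
    (α : PreType) (k : ℕ) (Ψ : HPT k) (w : CVal) : Prop :=
  ∃ (E : Finset MethName) (ls : MethName → Loc),
    w.1 = Tm.vobj E ls ∧ D ⊆ E ∧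
    ∃ α' : PreType, IsSemType α' ∧
      papprox α' k ⊆ papprox α k ∧
      (∀ d ∈ D, (⟨k, Ψ, ls d⟩ : RefEl) ∈ refTy (ν d) (arrTy α' (τs d))) ∧
      (∀ j < k, ∀ Ψ' : HPT j, ∀ ls' : MethName → Loc,
        StExt ⟨k, Ψ⟩ ⟨j, Ψ'⟩ →
        (∀ e ∈ E, Ψ'.lookA j (ls' e) = Ψ.lookA j (ls e)) →
        (⟨j, Ψ'.trunc j, CVal.mkVObj E ls'⟩ : Triple) ∈ α')

/-- `α` satisfies the recursive specification of the object type. -/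
def ObjFix (D : Finset MethName) (ν : MethName → Variance) (τs : MethName → PreType)
    (α : PreType) : Prop :=
  ∀ t : Triple, t ∈ α ↔ ObjMemProp D ν τs α t.1 t.2.1 t.2.2

/-- `α` satisfies the defining equivalence of the recursive type `μF` and
consists only of `fold`-values. -/
def MuFix (F : PreType → PreType) (α : PreType) : Prop :=
  (∀ t ∈ α, ∃ v : Tm, t.2.2.1 = Tm.fold v) ∧
  ∀ (k : ℕ) (Ψ : HPT k) (v : CVal) (hv : IsVal (Tm.fold v.1) ∧ fv (Tm.fold v.1) = ∅),
    (⟨k, Ψ, ⟨Tm.fold v.1, hv⟩⟩ : Triple) ∈ α ↔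
      ∀ j < k, (⟨j, Ψ.trunc j, v⟩ : Triple) ∈ F α

/-! # The syntactic type system -/

inductive SType : Type where
  | tvar : ℕ → SType
  | top : SType
  | bot : SType
  | arr : SType → SType → SType
  | obj : Finset MethName → (MethName → Variance) → (MethName → SType) → SType
  | mu : ℕ → SType → SType
  | all : ℕ → SType → SType → SType
  | ex : ℕ → SType → SType → SType

/-- Free type variables of a syntactic type. -/
def ftv : SType → Set ℕ
  | .tvar X => {X}
  | .top => ∅
  | .bot => ∅
  | .arr A B => ftv A ∪ ftv B
  | .obj D _ As => ⋃ d ∈ D, ftv (As d)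
  | .mu X A => ftv A \ {X}
  | .all X A B => ftv A ∪ (ftv B \ {X})
  | .ex X A B => ftv A ∪ (ftv B \ {X})

/-- Substitution `A[X ↦ C]` of a type for a type variable. -/
def tsubst : SType → ℕ → SType → SType
  | .tvar Y, X, C => if Y = X then C else .tvar Y
  | .top, _, _ => .top
  | .bot, _, _ => .bot
  | .arr A B, X, C => .arr (tsubst A X C) (tsubst B X C)
  | .obj D ν As, X, C => .obj D ν fun d => tsubst (As d) X C
  | .mu Y A, X, C => if Y = X then .mu Y A else .mu Y (tsubst A X C)
  | .all Y A B, X, C => .all Y (tsubst A X C) (if Y = X then B else tsubst B X C)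
  | .ex Y A B, X, C => .ex Y (tsubst A X C) (if Y = X then B else tsubst B X C)

/-- Context bindings: `X <: A` and `x : A`. -/
inductive Bind : Type where
  | tv : ℕ → SType → Bind
  | v : Var → SType → Bind

abbrev SCtx := List Bind

def tvDom (Γ : SCtx) : Set ℕ := {X | ∃ A, Bind.tv X A ∈ Γ}
def vDom (Γ : SCtx) : Set Var := {x | ∃ A, Bind.v x A ∈ Γ}

/-- Well-formed typing contexts. -/
inductive WfCtx : SCtx → Prop where
  | nil : WfCtx []
  | consV {Γ : SCtx} {x : Var} {A : SType} :
      WfCtx Γ → x ∉ vDom Γ → ftv A ⊆ tvDom Γ → WfCtx (Bind.v x A :: Γ)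
  | consT {Γ : SCtx} {X : ℕ} {A : SType} :
      WfCtx Γ → X ∉ tvDom Γ → ftv A ⊆ tvDom Γ → WfCtx (Bind.tv X A :: Γ)

/-- Well-formed types. -/
def WfTy (Γ : SCtx) (A : SType) : Prop := WfCtx Γ ∧ ftv A ⊆ tvDom Γ

/-- The subtyping judgement `Γ ⊢ A <: B`. -/
inductive Sub : SCtx → SType → SType → Prop where
  | refl {Γ A} : WfTy Γ A → Sub Γ A A
  | trans {Γ A A' B} : Sub Γ A A' → Sub Γ A' B → Sub Γ A B
  | top {Γ A} : WfTy Γ A → Sub Γ A .top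
  | bot {Γ A} : WfTy Γ A → Sub Γ .bot A
  | tvar {Γ X A} : WfCtx Γ → Bind.tv X A ∈ Γ → Sub Γ (.tvar X) A
  | arr {Γ A A' B B'} : Sub Γ A' A → Sub Γ B B' → Sub Γ (.arr A B) (.arr A' B')
  | obj {Γ} {D E : Finset MethName} {ν : MethName → Variance} {As Bs : MethName → SType} :
      E ⊆ D →
      (∀ e ∈ E, (ν e = .cov ∨ ν e = .inv) → Sub Γ (As e) (Bs e)) →
      (∀ e ∈ E, (ν e = .con ∨ ν e = .inv) → Sub Γ (Bs e) (As e)) →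
      Sub Γ (.obj D ν As) (.obj E ν Bs)
  | objvar {Γ} {D : Finset MethName} {ν ν' : MethName → Variance} {As : MethName → SType} :
      (∀ d ∈ D, ν d = .inv ∨ ν d = ν' d) →
      Sub Γ (.obj D ν As) (.obj D ν' As)
  | mu {Γ X Y A B} : WfTy Γ (.mu X A) → WfTy Γ (.mu Y B) →
      Sub (Bind.tv X (.tvar Y) :: Bind.tv Y .top :: Γ) A B →
      Sub Γ (.mu X A) (.mu Y B)
  | all {Γ X A A' B B'} : Sub Γ A' A → Sub (Bind.tv X A' :: Γ) B B' →
      Sub Γ (.all X A B) (.all X A' B')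
  | ex {Γ X A A' B B'} : Sub Γ A A' → Sub (Bind.tv X A :: Γ) B B' →
      Sub Γ (.ex X A B) (.ex X A' B')

/-- Type-annotated (source) terms. -/
inductive STm : Type where
  | var : Var → STm
  | obj : Finset MethName → (MethName → Variance) → (MethName → SType) →
      (MethName → Var) → (MethName → STm) → STm
  | inv : STm → MethName → STm
  | upd : STm → MethName → Var → SType → STm → STm
  | clone : STm → STm
  | lam : Var → SType → STm → STm
  | app : STm → STm → STm
  | fold : SType → STm → STm
  | unfd : SType → STm → STm
  | tlam : ℕ → SType → STm → STm
  | tapp : STm → SType → STm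
  | pack : ℕ → SType → SType → STm → SType → STm
  | opn : STm → ℕ → SType → Var → SType → STm → SType → STm

/-- Erasure of all type annotations. -/
def erase : STm → Tm
  | .var x => .var x
  | .obj D _ _ xs bs => .obj D xs fun d => erase (bs d)
  | .inv a m => .inv (erase a) m
  | .upd a m x _ b => .upd (erase a) m x (erase b)
  | .clone a => .clone (erase a)
  | .lam x _ b => .lam x (erase b)
  | .app a b => .app (erase a) (erase b)
  | .fold _ a => .fold (erase a)
  | .unfd _ a => .unfd (erase a)
  | .tlam _ _ b => .tlam (erase b)
  | .tapp a _ => .tapp (erase a)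
  | .pack _ _ _ a _ => .pack (erase a)
  | .opn a _ _ x _ b _ => .opn (erase a) x (erase b)

/-- Substitution `a[X ↦ C]` of a type for a type variable inside a term. -/
def stsubst : STm → ℕ → SType → STm
  | .var x, _, _ => .var x
  | .obj D ν As xs bs, X, C =>
      .obj D ν (fun d => tsubst (As d) X C) xs fun d => stsubst (bs d) X C
  | .inv a m, X, C => .inv (stsubst a X C) m
  | .upd a m x A b, X, C => .upd (stsubst a X C) m x (tsubst A X C) (stsubst b X C)
  | .clone a, X, C => .clone (stsubst a X C)
  | .lam x A b, X, C => .lam x (tsubst A X C) (stsubst b X C)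
  | .app a b, X, C => .app (stsubst a X C) (stsubst b X C)
  | .fold A a, X, C => .fold (tsubst A X C) (stsubst a X C)
  | .unfd A a, X, C => .unfd (tsubst A X C) (stsubst a X C)
  | .tlam Y A b, X, C =>
      .tlam Y (tsubst A X C) (if Y = X then b else stsubst b X C)
  | .tapp a A, X, C => .tapp (stsubst a X C) (tsubst A X C)
  | .pack Y A B a B', X, C =>
      .pack Y (tsubst A X C) (tsubst B X C)
        (if Y = X then a else stsubst a X C) (if Y = X then B' else tsubst B' X C)
  | .opn a Y A x B b Cr, X, C =>
      .opn (stsubst a X C) Y (tsubst A X C) x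
        (if Y = X then B else tsubst B X C) (if Y = X then b else stsubst b X C)
        (tsubst Cr X C)

/-- The typing judgement `Γ ⊢ a : A`. -/
inductive Ty : SCtx → STm → SType → Prop where
  | sub {Γ a A B} : Ty Γ a A → Sub Γ A B → Ty Γ a B
  | var {Γ x A} : WfCtx Γ → Bind.v x A ∈ Γ → Ty Γ (.var x) A
  | lam {Γ x A b B} : Ty (Bind.v x A :: Γ) b B → Ty Γ (.lam x A b) (.arr A B)
  | app {Γ a b A B} : Ty Γ a (.arr B A) → Ty Γ b B → Ty Γ (.app a b) A
  | obj {Γ} {D : Finset MethName} {ν : MethName → Variance} {As : MethName → SType}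
      {xs : MethName → Var} {bs : MethName → STm} :
      (∀ d ∈ D, Ty (Bind.v (xs d) (.obj D ν As) :: Γ) (bs d) (As d)) →
      Ty Γ (.obj D ν As xs bs) (.obj D ν As)
  | clone {Γ a} {D : Finset MethName} {ν : MethName → Variance} {As : MethName → SType} :
      Ty Γ a (.obj D ν As) → Ty Γ (.clone a) (.obj D ν As)
  | inv {Γ a} {D : Finset MethName} {ν : MethName → Variance} {As : MethName → SType}
      {e : MethName} :
      Ty Γ a (.obj D ν As) → e ∈ D → (ν e = .cov ∨ ν e = .inv) →
      Ty Γ (.inv a e) (As e)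
  | upd {Γ a} {D : Finset MethName} {ν : MethName → Variance} {As : MethName → SType}
      {e : MethName} {x : Var} {b : STm} :
      Ty Γ a (.obj D ν As) → e ∈ D →
      Ty (Bind.v x (.obj D ν As) :: Γ) b (As e) → (ν e = .con ∨ ν e = .inv) →
      Ty Γ (.upd a e x (.obj D ν As) b) (.obj D ν As)
  | unfold {Γ a X A} :
      Ty Γ a (.mu X A) → Ty Γ (.unfd (.mu X A) a) (tsubst A X (.mu X A))
  | fold {Γ a X A} :
      Ty Γ a (tsubst A X (.mu X A)) → Ty Γ (.fold (.mu X A) a) (.mu X A)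
  | tabs {Γ X A b B} : Ty (Bind.tv X A :: Γ) b B → Ty Γ (.tlam X A b) (.all X A B)
  | tapp {Γ a X A B A'} :
      Ty Γ a (.all X A B) → Sub Γ A' A → Ty Γ (.tapp a A') (tsubst B X A')
  | pack {Γ X A C a B} : Sub Γ C A → Ty Γ (stsubst a X C) (tsubst B X C) →
      Ty Γ (.pack X A C a B) (.ex X A B)
  | opn {Γ a X A x B b C} : Ty Γ a (.ex X A B) → WfTy Γ C →
      Ty (Bind.v x B :: Bind.tv X A :: Γ) b C →
      Ty Γ (.opn a X A x B b C) C

/-! # Interpretation of syntactic types -/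

/-- The interpretation `⟦A⟧η` of a syntactic type. -/
def interp : SType → (ℕ → PreType) → PreType
  | .tvar X, η => η X
  | .top, _ => topTy
  | .bot, _ => botTy
  | .arr A B, η => arrTy (interp A η) (interp B η)
  | .obj D ν As, η => objTy D ν fun d => interp (As d) η
  | .mu X A, η => muTy fun α => interp A (Function.update η X α)
  | .all X A B, η => allTy (interp A η) fun α => interp B (Function.update η X α)
  | .ex X A B, η => exTy (interp A η) fun α => interp B (Function.update η X α)

/-- `η ⊨ Γ`: `η` maps type variables to semantic types and respects the bounds in `Γ`. -/
def EnvModels (η : ℕ → PreType) (Γ : SCtx) : Prop :=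
  (∀ X, IsSemType (η X)) ∧ ∀ X A, Bind.tv X A ∈ Γ → η X ⊆ interp A η

/-- The semantic type environment `⟦Γ⟧η`. -/
def interpCtx (Γ : SCtx) (η : ℕ → PreType) : SemEnv :=
  fun x =>
    Γ.findSome? fun b =>
      match b with
      | Bind.v y A => if y = x then some (interp A η) else none
      | _ => none

lemma removeKey_none {σ : Var → Option Tm} (hσ : ∀ x, σ x = none) {x : Var} : ∀ y, removeKey σ x y = none := by
  intro y; unfold removeKey; split <;> simp [hσ]

lemma msubst_none : ∀ (a : Tm) (σ : Var → Option Tm), (∀ x, σ x = none) → msubst a σ = a := by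
  intro a
  induction a with
  | var x => intro σ hσ; simp [msubst, hσ]
  | obj D xs bs ih =>
      intro σ hσ
      simp only [msubst, Tm.obj.injEq, true_and]
      funext d
      exact ih d _ (removeKey_none hσ)
  | vobj E ls => intro σ hσ; rfl
  | inv a m ih => intro σ hσ; simp [msubst, ih σ hσ]
  | upd a m x b iha ihb =>
      intro σ hσ
      simp [msubst, iha σ hσ, ihb _ (removeKey_none hσ)]
  | clone a ih => intro σ hσ; simp [msubst, ih σ hσ]
  | lam x b ih =>
      intro σ hσ
      simp [msubst, ih _ (removeKey_none hσ)]
  | app a b iha ihb => intro σ hσ; simp [msubst, iha σ hσ, ihb σ hσ]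
  | fold a ih => intro σ hσ; simp [msubst, ih σ hσ]
  | unfd a ih => intro σ hσ; simp [msubst, ih σ hσ]
  | tlam a ih => intro σ hσ; simp [msubst, ih σ hσ]
  | tapp a ih => intro σ hσ; simp [msubst, ih σ hσ]
  | pack a ih => intro σ hσ; simp [msubst, ih σ hσ]
  | opn a x b iha ihb =>
      intro σ hσ
      simp [msubst, iha σ hσ, ihb _ (removeKey_none hσ)]

/-- The empty heap typing at level `k`. -/
def emptyHPT (k : ℕ) : HPT k :=
  ⟨fun _ => none, by simp⟩

/-- **Safety.** If a program `a` (closed, location-free) satisfies `∅ ⊨ a : τ` for a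
semantic type `τ`, then `⟨h, a⟩` is safe for every heap `h`. -/
theorem safety (a : Tm) (τ : PreType) (hτ : IsSemType τ)
    (hclosed : fv a = ∅) (hnoloc : locs a = ∅)
    (h : SemJudg (fun _ => none) a τ) :
    ∀ hp : Heap, Safe (hp, a) := by
  intro hp k j hj c' hstep hirred
  obtain ⟨h', b⟩ := c'
  have hty : HasTypeAt a (emptyHPT (j + 1)) τ := by
    have := h.2 (j + 1) (emptyHPT (j + 1))
      (by intro l S hS; simp [emptyHPT] at hS)
      (fun _ => none)
      (by intro x τ' hx; simp at hx)
    rwa [msubst_none a (toSubst fun _ => none) (fun x => rfl)] at this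
  have := hty j (Nat.lt_succ_self j) hp h' b
    (by
      constructor
      · intro l hl; simp [HPT.dom, emptyHPT] at hl
      · intro j' _ l S hS; simp [emptyHPT] at hS)
    hstep hirred
  obtain ⟨Ψ', _, _, _, hb, _⟩ := this
  exact hb.1

end ImpObj
end

section
/- Reference types: for every semantic type τ and every ν ∈ {inv,cov,con}, the set ref^ν τ is closed under state extension; ref^inv τ = ref^cov τ ∩ ref^con τ; (SemSubCovRef) α ⊆ β implies ref^cov α ⊆ ref^cov β; (SemSubConRef) β ⊆ α implies ref^con α ⊆ ref^con β; and (SemSubVarRef) ref^inv α ⊆ ref^ν α for every ν ∈ {inv,cov,con}. -/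
set_option maxHeartbeats 1000000

namespace ImpObj

lemma papprox_lower {σ τ : PreType} {j k : ℕ} (h : j ≤ k)
    (hsub : papprox σ k ⊆ papprox τ k) : papprox σ j ⊆ papprox τ j := by
  intro t ht
  obtain ⟨h1, h2⟩ := ht
  have : t ∈ papprox τ k := hsub ⟨h1, lt_of_lt_of_le h2 h⟩
  exact ⟨this.1, h2⟩

lemma papprox_lower_eq {σ τ : PreType} {j k : ℕ} (h : j ≤ k)
    (heq : papprox σ k = papprox τ k) : papprox σ j = papprox τ j :=
  Set.Subset.antisymm (papprox_lower h heq.le) (papprox_lower h heq.ge)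

lemma stext_look {k : ℕ} {Ψ : HPT k} {j : ℕ} {Ψ' : HPT j} {l : Loc} {S : Approx k}
    (hext : StExt ⟨k, Ψ⟩ ⟨j, Ψ'⟩) (hS : Ψ.1 l = some S) :
    ∃ S' : Approx j, Ψ'.1 l = some S' ∧
      papprox (Approx.seg S') j = papprox (Approx.seg S) j := by
  have hdom : l ∈ Ψ.dom := by simp [HPT.dom, hS]
  have hl := hext.2.2 l hdom
  rw [HPT.lookA, HPT.lookA, HPT.look, HPT.look, hS] at hl
  cases hS' : Ψ'.1 l with
  | none => rw [hS'] at hl; simp at hl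
  | some S' =>
    rw [hS'] at hl
    simp only [Option.map_some] at hl
    exact ⟨S', rfl, Option.some.inj hl⟩

lemma refClosed (τ : PreType) (ν : Variance) : RefClosed (refTy ν τ) := by
  rintro ⟨k, Ψ, l⟩ hp j Ψ' hext
  have hjk : j ≤ k := hext.1
  cases ν <;>
  · obtain ⟨S, hS, hcond⟩ := hp
    obtain ⟨S', hS', heq⟩ := stext_look hext hS
    refine ⟨S', hS', ?_⟩
    simp only [heq]
    first
      | exact papprox_lower_eq hjk hcond
      | exact papprox_lower hjk hcond

/-- **Reference types.** For every semantic type, `ref^ν τ` is closed under state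
extension; `ref^inv τ = ref^cov τ ∩ ref^con τ`; and the subtyping lemmas
(SemSubCovRef), (SemSubConRef), (SemSubVarRef) hold. -/
theorem reference_types :
    (∀ τ : PreType, IsSemType τ → ∀ ν : Variance, RefClosed (refTy ν τ)) ∧
    (∀ τ : PreType, IsSemType τ → refTy .inv τ = refTy .cov τ ∩ refTy .con τ) ∧
    (∀ α β : PreType, IsSemType α → IsSemType β → α ⊆ β → refTy .cov α ⊆ refTy .cov β) ∧
    (∀ α β : PreType, IsSemType α → IsSemType β → β ⊆ α → refTy .con α ⊆ refTy .con β) ∧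
    (∀ α : PreType, IsSemType α → ∀ ν : Variance, refTy .inv α ⊆ refTy ν α) := by
  refine ⟨fun τ _ ν => refClosed τ ν, ?_, ?_, ?_, ?_⟩
  · intro τ _
    ext ⟨k, Ψ, l⟩
    constructor
    · rintro ⟨S, hS, heq⟩
      exact ⟨⟨S, hS, heq.le⟩, ⟨S, hS, heq.ge⟩⟩
    · rintro ⟨⟨S, hS, h1⟩, ⟨S', hS', h2⟩⟩
      rw [hS] at hS'
      obtain rfl := Option.some.inj hS'
      exact ⟨S, hS, Set.Subset.antisymm h1 h2⟩
  · rintro α β _ _ hab ⟨k, Ψ, l⟩ ⟨S, hS, hsub⟩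
    exact ⟨S, hS, hsub.trans fun t ht => ⟨hab ht.1, ht.2⟩⟩
  · rintro α β _ _ hba ⟨k, Ψ, l⟩ ⟨S, hS, hsub⟩
    exact ⟨S, hS, fun t ht => hsub ⟨hba ht.1, ht.2⟩⟩
  · rintro α _ ν ⟨k, Ψ, l⟩ ⟨S, hS, heq⟩
    cases ν
    · exact ⟨S, hS, heq⟩
    · exact ⟨S, hS, heq.le⟩
    · exact ⟨S, hS, heq.ge⟩

end ImpObj
end

section
/- Method invocation (SemInv): let α = [m_d :ν_d τ_d]_{d∈D} be an object type with each τ_d a semantic type. If Σ ⊨ a : α, e ∈ D and ν_e ∈ {cov, inv}, then Σ ⊨ a.m_e : τ_e. -/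
set_option maxHeartbeats 1000000

namespace ImpObj

/-!
Reduce `a.m_e` in three phases: the invocand `a` runs to an irreducible term,
which by `Σ ⊨ a : α` is an object `{m_e = l_e}` of type `α` in a later, well-typed state;
the invocation step reads the method `h(l_e)`, which, since `m_e` is readable (`ν_e ∈ {cov, inv}`),
has type `α' → τ_e` one step later; and the object itself belongs to the self type `α'` (Obj-3) two
steps later, so the β-step leaves a body of type `τ_e`. Each of the two administrative steps costs
one step index, which the approximations `⌊Ψ⌋_j` absorb.
-/

section Reduction

theorem StepN.succ_head : ∀ {n : ℕ} {c c'' : Config}, StepN (n + 1) c c'' →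
    ∃ c', Step c c' ∧ StepN n c' c''
  | 0, _, _, .tail (.refl _) hs => ⟨_, hs, .refl _⟩
  | _ + 1, _, _, .tail hpre hs =>
    let ⟨c', hfirst, hrest⟩ := succ_head hpre
    ⟨c', hfirst, hrest.tail hs⟩

theorem IsVal.of_plug {E : ECtx} {r : Tm} (h : IsVal (E.plug r)) : IsVal r := by
  induction E with
  | hole => exact h
  | fold E ih => cases h with | fold h => exact ih h
  | pack E ih => cases h with | pack h => exact ih h
  | _ => cases h

theorem Head.not_isVal {h : Heap} {r : Tm} {c : Config} (hh : Head (h, r) c) : ¬ IsVal r := by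
  intro hv; cases hh <;> cases hv

theorem IsVal.irred {h : Heap} {v : Tm} (hv : IsVal v) : Irred (h, v) := by
  rintro ⟨_, ⟨E, hh⟩⟩
  exact hh.not_isVal hv.of_plug

theorem Step.exists_plug {c d : Config} (hs : Step c d) :
    ∃ (E : ECtx) (h h' : Heap) (a a' : Tm),
      c = (h, E.plug a) ∧ d = (h', E.plug a') ∧ Head (h, a) (h', a') := by
  cases hs with
  | ctx E hh => exact ⟨E, _, _, _, _, rfl, rfl, hh⟩

theorem Step.inv {h h' : Heap} {a a' : Tm} (e : MethName) (hs : Step (h, a) (h', a')) :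
    Step (h, .inv a e) (h', .inv a' e) := by
  obtain ⟨E, _, _, _, _, hc, hd, hh⟩ := hs.exists_plug
  cases hc; cases hd
  exact .ctx (.inv E e) hh

theorem Irred.of_inv {h : Heap} {a : Tm} {e : MethName} (hi : Irred (h, .inv a e)) :
    Irred (h, a) := by
  rintro ⟨⟨h', a'⟩, hs⟩
  exact hi ⟨_, hs.inv e⟩

theorem Step.inv_cases {h : Heap} {a : Tm} {e : MethName} {d : Config}
    (hs : Step (h, .inv a e) d) :
    (∃ h' a', Step (h, a) (h', a') ∧ d = (h', .inv a' e)) ∨ Head (h, .inv a e) d := by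
  obtain ⟨E, _, _, _, _, hc, rfl, hh⟩ := hs.exists_plug
  cases E <;> simp only [ECtx.plug, Prod.mk.injEq, reduceCtorEq, Tm.inv.injEq, and_false] at hc
  case hole => obtain ⟨rfl, rfl⟩ := hc; exact .inr hh
  case inv E m => obtain ⟨rfl, rfl, rfl⟩ := hc; exact .inl ⟨_, _, .ctx E hh, rfl⟩

theorem step_inv_vobj_iff {h : Heap} {E : Finset MethName} {ls : MethName → Loc}
    {e : MethName} {f : Tm} (he : e ∈ E) (hf : h.get? (ls e) = some f) {d : Config} :
    Step (h, .inv (.vobj E ls) e) d ↔ d = (h, .app f (.vobj E ls)) := by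
  refine ⟨fun hs => ?_, fun hd => hd ▸ .ctx .hole (.inv he hf)⟩
  rcases hs.inv_cases with ⟨_, _, hstep, -⟩ | hh
  · exact absurd ⟨_, hstep⟩ (IsVal.irred (.vobj E ls))
  · cases hh with
    | inv _ hg => rw [hf, Option.some.injEq] at hg; rw [hg]

theorem step_app_lam_iff {h : Heap} {x : Var} {b v : Tm} (hv : IsVal v) {d : Config} :
    Step (h, .app (.lam x b) v) d ↔ d = (h, subst1 b x v) := by
  refine ⟨fun hs => ?_, fun hd => hd ▸ .ctx .hole (.beta hv)⟩
  obtain ⟨E, _, _, _, _, hc, rfl, hh⟩ := hs.exists_plug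
  cases E <;> simp only [ECtx.plug, Prod.mk.injEq, reduceCtorEq, Tm.app.injEq, and_false] at hc
  case hole => obtain ⟨rfl, rfl⟩ := hc; cases hh; rfl
  case appL E _ => exact absurd (hc.2.1 ▸ IsVal.lam x b).of_plug hh.not_isVal
  case appR E => exact absurd (hc.2.2 ▸ hv).of_plug hh.not_isVal

theorem StepN.inv_cases {e : MethName} {n : ℕ} {c d : Config} (hs : StepN n c d) :
    ∀ {h : Heap} {a : Tm}, c = (h, .inv a e) →
    (∃ h' a', d = (h', .inv a' e) ∧ StepN n (h, a) (h', a')) ∨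
    ∃ i ≤ n, ∃ (h₁ : Heap) (v : Tm), IsVal v ∧ StepN i (h, a) (h₁, v) ∧
      StepN (n - i) (h₁, .inv v e) d := by
  induction hs with
  | refl => rintro h a rfl; exact .inl ⟨h, a, rfl, .refl _⟩
  | @tail n _ _ _ _ hlast ih =>
    rintro h a rfl
    rcases ih rfl with ⟨h₂, a₂, rfl, hpre⟩ | ⟨i, hi, h₁, v, hv, hpre, hrest⟩
    · rcases hlast.inv_cases with ⟨h₃, a₃, hstep, rfl⟩ | hh
      · exact .inl ⟨h₃, a₃, rfl, hpre.tail hstep⟩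
      · have hval : IsVal a₂ := by cases hh; exact .vobj _ _
        refine .inr ⟨n, by omega, h₂, a₂, hval, hpre, ?_⟩
        rw [show n + 1 - n = 0 + 1 by omega]
        exact (StepN.refl _).tail hlast
    · refine .inr ⟨i, by omega, h₁, v, hv, hpre, ?_⟩
      rw [show n + 1 - i = n - i + 1 by omega]
      exact hrest.tail hlast

theorem StepN.inv_split {e : MethName} {n : ℕ} {h h' : Heap} {a b : Tm}
    (hs : StepN n (h, .inv a e) (h', b)) (hirr : Irred (h', b)) :
    ∃ i ≤ n, ∃ (h₁ : Heap) (a₁ : Tm), StepN i (h, a) (h₁, a₁) ∧ Irred (h₁, a₁) ∧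
      StepN (n - i) (h₁, .inv a₁ e) (h', b) := by
  rcases hs.inv_cases rfl with ⟨h₂, a₂, hd, hpre⟩ | ⟨i, hi, h₁, v, hv, hpre, hrest⟩
  · cases hd
    exact ⟨n, le_rfl, h', a₂, hpre, hirr.of_inv, by rw [Nat.sub_self]; exact .refl _⟩
  · exact ⟨i, hi, h₁, v, hpre, hv.irred, hrest⟩

end Reduction

section Approximation

theorem seg_toApprox (τ : PreType) (m : ℕ) : (toApprox τ m).seg = papprox τ m := by
  ext t
  simp only [Approx.seg, toApprox, Approx.out, Approx.mk', cast_cast, cast_eq, papprox]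
  exact ⟨fun ⟨hlt, hmem⟩ => ⟨hmem, hlt⟩, fun ⟨hmem, hlt⟩ => ⟨hlt, hmem⟩⟩

theorem papprox_papprox (τ : PreType) {n m : ℕ} (h : n ≤ m) :
    papprox (papprox τ m) n = papprox τ n := by
  ext t
  exact ⟨fun ⟨⟨ht, _⟩, hn⟩ => ⟨ht, hn⟩, fun ⟨ht, hn⟩ => ⟨⟨ht, lt_of_lt_of_le hn h⟩, hn⟩⟩

theorem toApprox_papprox (τ : PreType) {n m : ℕ} (h : n ≤ m) :
    toApprox (papprox τ m) n = toApprox τ n := by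
  unfold toApprox
  congr 1
  ext p
  exact ⟨And.left, fun hp => ⟨hp, lt_of_lt_of_le p.1.2 h⟩⟩

theorem HPT.dom_trunc {k : ℕ} (Ψ : HPT k) (m : ℕ) : (Ψ.trunc m).dom = Ψ.dom := by
  ext l
  simp [HPT.dom, HPT.trunc]

theorem HPT.lookA_trunc {k : ℕ} (Ψ : HPT k) {n m : ℕ} (h : n ≤ m) (l : Loc) :
    (Ψ.trunc m).lookA n l = Ψ.lookA n l := by
  cases hl : Ψ.1 l <;> simp [HPT.lookA, HPT.look, HPT.trunc, hl, seg_toApprox, papprox_papprox _ h]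

theorem HPT.trunc_trunc {k : ℕ} (Ψ : HPT k) {n m : ℕ} (h : n ≤ m) :
    (Ψ.trunc m).trunc n = Ψ.trunc n := by
  apply Subtype.ext
  funext l
  cases hl : Ψ.1 l <;> simp [HPT.trunc, hl, seg_toApprox, toApprox_papprox _ h]

theorem HPT.lookA_mono {k k' : ℕ} {Ψ : HPT k} {Ψ' : HPT k'} {m n : ℕ} {l : Loc} (h : n ≤ m)
    (heq : Ψ.lookA m l = Ψ'.lookA m l) : Ψ.lookA n l = Ψ'.lookA n l := by
  have := congrArg (Option.map (papprox · n)) heq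
  simpa [HPT.lookA, Option.map_map, Function.comp_def, papprox_papprox _ h] using this

theorem stExt_trunc {k : ℕ} (Ψ : HPT k) {m : ℕ} (h : m ≤ k) : StExt ⟨k, Ψ⟩ ⟨m, Ψ.trunc m⟩ :=
  ⟨h, (Ψ.dom_trunc m).symm.subset, fun l _ => Ψ.lookA_trunc le_rfl l⟩

theorem stExt_trans {s t u : St} (h₁ : StExt s t) (h₂ : StExt t u) : StExt s u :=
  ⟨h₂.1.trans h₁.1, h₁.2.1.trans h₂.2.1, fun l hl =>
    (h₂.2.2 l (h₁.2.1 hl)).trans (HPT.lookA_mono h₂.1 (h₁.2.2 l hl))⟩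

theorem IsSemType.papprox {τ : PreType} (h : IsSemType τ) (m : ℕ) :
    IsSemType (papprox τ m) := fun t ht j Ψ' hext =>
  ⟨h t ht.1 j Ψ' hext, lt_of_le_of_lt hext.1 ht.2⟩

theorem HPT.IsTy.trunc {k : ℕ} {Ψ : HPT k} (h : Ψ.IsTy) (m : ℕ) : (Ψ.trunc m).IsTy := by
  intro l S' hS'
  cases hl : Ψ.1 l with
  | none => simp [HPT.trunc, hl] at hS'
  | some S =>
    simp only [HPT.trunc, hl, Option.map_some, Option.some.injEq] at hS'
    rw [← hS', seg_toApprox]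
    exact (h l S hl).papprox m

theorem HeapOk.trunc {h : Heap} {k : ℕ} {Ψ : HPT k} (hok : HeapOk h Ψ) {m : ℕ}
    (hm : m ≤ k) : HeapOk h (Ψ.trunc m) := by
  refine ⟨fun l hl => hok.1 l (by rwa [HPT.dom_trunc] at hl), ?_⟩
  intro j hj l S' hS' v hv
  cases hl : Ψ.1 l with
  | none => simp [HPT.trunc, hl] at hS'
  | some S =>
    simp only [HPT.trunc, hl, Option.map_some, Option.some.injEq] at hS'
    rw [Ψ.trunc_trunc hj.le, ← hS', seg_toApprox]
    exact ⟨hok.2 j (lt_of_lt_of_le hj hm) l S hl v hv, hj⟩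

theorem HeapOk.read {h : Heap} {k : ℕ} {Ψ : HPT k} (hok : HeapOk h Ψ) {l : Loc}
    {S : Approx k} (hS : Ψ.1 l = some S) :
    ∃ f : CVal, h.fn l = some f ∧ ∀ j < k, (⟨j, Ψ.trunc j, f⟩ : Triple) ∈ S.seg := by
  obtain ⟨f, hf⟩ := Option.ne_none_iff_exists'.mp (hok.1 l (by simp [HPT.dom, hS]))
  exact ⟨f, hf, fun j hj => hok.2 j hj l S hS f hf⟩

end Approximation

section Typing

theorem HasTypeAt.of_pure_step {c : Tm} {k : ℕ} {Ψ : HPT k} {τ : PreType}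
    (hstep : 0 < k → ∀ h, HeapOk h Ψ →
      ∃ c', (∀ d, Step (h, c) d ↔ d = (h, c')) ∧ HasTypeAt c' (Ψ.trunc (k - 1)) τ) :
    HasTypeAt c Ψ τ := by
  intro j hj h h' b hok hsteps hirr
  obtain ⟨c', hdet, hc'⟩ := hstep (by omega) h hok
  cases j with
  | zero => cases hsteps; exact absurd ⟨_, (hdet _).2 rfl⟩ hirr
  | succ r =>
    obtain ⟨d, hd, hrest⟩ := hsteps.succ_head
    rw [(hdet d).1 hd] at hrest
    obtain ⟨Ψ', hΨ', hext, hok', hb, hmem⟩ :=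
      hc' r (by omega) h h' b (hok.trunc (by omega)) hrest hirr
    rw [show k - (r + 1) = k - 1 - r by omega]
    exact ⟨Ψ', hΨ', stExt_trans (stExt_trunc Ψ (by omega)) hext, hok', hb, hmem⟩

theorem HasTypeAt.app_of_mem_arrTy {α β : PreType} {k : ℕ} {Ψ : HPT k} {f v : CVal}
    (hf : (⟨k, Ψ, f⟩ : Triple) ∈ arrTy α β) (hΨ : Ψ.IsTy)
    (hv : 0 < k → (⟨k - 1, Ψ.trunc (k - 1), v⟩ : Triple) ∈ α) :
    HasTypeAt (.app f.1 v.1) Ψ β := by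
  obtain ⟨x, b, hlam, hbody⟩ := hf
  rw [hlam]
  refine .of_pure_step fun hk _ _ => ⟨_, fun _ => step_app_lam_iff v.2.1, ?_⟩
  exact hbody (k - 1) (show k - 1 < k by omega) _ (hΨ.trunc _) v (stExt_trunc Ψ (by omega)) (hv hk)

theorem HasTypeAt.inv_bind {a : Tm} {e : MethName} {k : ℕ} {Ψ : HPT k} {α β : PreType}
    (ha : HasTypeAt a Ψ α)
    (hcont : ∀ (j : ℕ) (Ψ' : HPT j) (v : CVal), Ψ'.IsTy → (⟨j, Ψ', v⟩ : Triple) ∈ α →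
      HasTypeAt (.inv v.1 e) Ψ' β) :
    HasTypeAt (.inv a e) Ψ β := by
  intro j hj h h' b hok hsteps hirr
  obtain ⟨i, hij, h₁, a₁, hpre, hirr₁, hrest⟩ := hsteps.inv_split hirr
  obtain ⟨Ψ₁, hΨ₁, hext₁, hok₁, ha₁, hmem₁⟩ := ha i (by omega) h h₁ a₁ hok hpre hirr₁
  obtain ⟨Ψ', hΨ', hext', hok', hb, hmem⟩ :=
    hcont _ Ψ₁ ⟨a₁, ha₁⟩ hΨ₁ hmem₁ (j - i) (by omega) h₁ h' b hok₁ hrest hirr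
  rw [show k - j = k - i - (j - i) by omega]
  exact ⟨Ψ', hΨ', stExt_trans hext₁ hext', hok', hb, hmem⟩

theorem refCov_of_refTy {ν : Variance} {τ : PreType} {p : RefEl}
    (hν : ν = .cov ∨ ν = .inv) (hp : p ∈ refTy ν τ) : p ∈ refCov τ := by
  rcases hν with rfl | rfl
  · exact hp
  · obtain ⟨S, hS, heq⟩ := hp
    exact ⟨S, hS, heq.le⟩

theorem mem_objTy_method {D : Finset MethName} {ν : MethName → Variance}
    {τs : MethName → PreType} {e : MethName} {k : ℕ} {Ψ : HPT k} {v : CVal}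
    (hv : (⟨k, Ψ, v⟩ : Triple) ∈ objTy D ν τs) (he : e ∈ D)
    (hν : ν e = .cov ∨ ν e = .inv) :
    ∃ (E : Finset MethName) (ls : MethName → Loc), v.1 = .vobj E ls ∧ e ∈ E ∧
      ∃ (α' : PreType) (S : Approx k), Ψ.1 (ls e) = some S ∧
        papprox S.seg k ⊆ papprox (arrTy α' (τs e)) k ∧
        ∀ j < k, (⟨j, Ψ.trunc j, v⟩ : Triple) ∈ α' := by
  obtain ⟨E, ls, hvE, hDE, α', -, -, href, hself⟩ := (objSlice.eq_1 _ _ _ _ _ _).mp hv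
  obtain ⟨S, hS, hsub⟩ := refCov_of_refTy hν (href e he)
  refine ⟨E, ls, hvE, hDE he, α', S, hS, hsub, fun j hj => ?_⟩
  have hmem := hself j hj (Ψ.trunc j) ls (stExt_trunc Ψ hj.le)
    fun e _ => Ψ.lookA_trunc le_rfl (ls e)
  rwa [Ψ.trunc_trunc le_rfl, show CVal.mkVObj E ls = v from Subtype.ext hvE.symm] at hmem

theorem HasTypeAt.inv_of_mem_objTy {D : Finset MethName} {ν : MethName → Variance}
    {τs : MethName → PreType} {e : MethName} {k : ℕ} {Ψ : HPT k} {v : CVal}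
    (hv : (⟨k, Ψ, v⟩ : Triple) ∈ objTy D ν τs) (hΨ : Ψ.IsTy) (he : e ∈ D)
    (hν : ν e = .cov ∨ ν e = .inv) :
    HasTypeAt (.inv v.1 e) Ψ (τs e) := by
  obtain ⟨E, ls, hvE, heE, α', S, hS, hsub, hself⟩ := mem_objTy_method hv he hν
  refine .of_pure_step fun hk h hok => ?_
  obtain ⟨f, hf, hfS⟩ := hok.read hS
  have hget : h.get? (ls e) = some f.1 := by rw [Heap.get?, hf]; rfl
  refine ⟨.app f.1 v.1, fun d => hvE ▸ step_inv_vobj_iff heE hget, ?_⟩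
  have hfarr : (⟨k - 1, Ψ.trunc (k - 1), f⟩ : Triple) ∈ arrTy α' (τs e) :=
    (hsub ⟨hfS (k - 1) (by omega), show k - 1 < k by omega⟩).1
  refine .app_of_mem_arrTy hfarr (hΨ.trunc _) fun _ => ?_
  rw [Ψ.trunc_trunc (by omega)]
  exact hself _ (by omega)

end Typing

theorem semInv_general (D : Finset MethName) (ν : MethName → Variance) (τs : MethName → PreType)
    (Γ : SemEnv)
    (a : Tm) (e : MethName) (he : e ∈ D)
    (hν : ν e = Variance.cov ∨ ν e = Variance.inv)
    (h : SemJudg Γ a (objTy D ν τs)) :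
    SemJudg Γ (Tm.inv a e) (τs e) :=
  ⟨h.1, fun k Ψ hΨ σ hσ => (h.2 k Ψ hΨ σ hσ).inv_bind fun _ _ _ hΨ' hv =>
    .inv_of_mem_objTy hv hΨ' he hν⟩

/-- **(SemInv) Method invocation.** If `Σ ⊨ a : [m_d :ν_d τ_d]_{d∈D}`, `e ∈ D` and
`ν_e ∈ {cov, inv}`, then `Σ ⊨ a.m_e : τ_e`. -/
theorem semInv (D : Finset MethName) (ν : MethName → Variance) (τs : MethName → PreType)
    (hτ : ∀ d ∈ D, IsSemType (τs d)) (Γ : SemEnv) (hΓ : EnvSem Γ)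
    (a : Tm) (e : MethName) (he : e ∈ D)
    (hν : ν e = Variance.cov ∨ ν e = Variance.inv)
    (h : SemJudg Γ a (objTy D ν τs)) :
    SemJudg Γ (Tm.inv a e) (τs e) :=
  semInv_general D ν τs Γ a e he hν h

end ImpObj
end
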